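/- The number of Dyck path packings of length 2n equals C_n * C_{n+1}. -/
import Mathlib


/-- A Dyck path of length `2n`, encoded by its heights. -/
def IsDyckPath (n : ℕ) (h : Fin (2*n + 1) → ℕ) : Prop :=
  h 0 = 0 ∧ h (Fin.last (2*n)) = 0 ∧
  ∀ i : Fin (2*n), h i.succ = h i.castSucc + 1 ∨ h i.castSucc = h i.succ + 1

/-- A dispersed Dyck path of length `2n`. -/
def IsDispersedDyck (n : ℕ) (h : Fin (2*n + 1) → ℕ) : Prop :=
  h 0 = 0 ∧ h (Fin.last (2*n)) = 0 ∧
  ∀ i : Fin (2*n), h i.succ = h i.castSucc + 1 ∨ h i.castSucc = h i.succ + 1 ∨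
    (h i.succ = h i.castSucc ∧ h i.castSucc = 0)

/-- A Dyck path packing of length `2n`. -/
def IsDyckPacking (n : ℕ) (D E : Fin (2*n + 1) → ℕ) : Prop :=
  IsDyckPath n D ∧ IsDispersedDyck n E ∧ ∀ i, E i ≤ D i


noncomputable section PackingProof

/-- gated inverse factorial of `k/2` -/
def psiQ (k : ℤ) : ℚ :=
  if 0 ≤ k ∧ 2 ∣ k then ((k.toNat / 2).factorial : ℚ)⁻¹ else 0

lemma psiQ_of_neg {k : ℤ} (h : k < 0) : psiQ k = 0 := by
  rw [psiQ, if_neg]; rintro ⟨h1, -⟩; omega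

lemma psiQ_of_odd {k : ℤ} (h : ¬ 2 ∣ k) : psiQ k = 0 := by
  rw [psiQ, if_neg]; rintro ⟨-, h2⟩; exact h h2

lemma psiQ_two_mul (k : ℕ) : psiQ (2 * k) = ((k.factorial : ℚ))⁻¹ := by
  rw [psiQ, if_pos ⟨by positivity, ⟨(k : ℤ), by ring⟩⟩]
  norm_num
  congr 1
  omega

lemma psiQ_down (k : ℤ) : psiQ (k - 2) = (k : ℚ) / 2 * psiQ k := by
  rcases lt_or_ge k 0 with h | h
  · rw [psiQ_of_neg h, psiQ_of_neg (by omega), mul_zero]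
  by_cases h2 : 2 ∣ k
  · obtain ⟨t, rfl⟩ := h2
    lift t to ℕ using (by omega)
    rcases Nat.eq_zero_or_pos t with rfl | ht
    · norm_num [psiQ_of_neg]
    · obtain ⟨s, rfl⟩ : ∃ s, t = s + 1 := ⟨t - 1, by omega⟩
      have e1 : (2 : ℤ) * ((s : ℕ) + 1 : ℕ) - 2 = 2 * (s : ℕ) := by push_cast; ring
      rw [e1, psiQ_two_mul, psiQ_two_mul, Nat.factorial_succ]
      have hs : (s.factorial : ℚ) ≠ 0 := by positivity
      have hs2 : ((s : ℚ) + 1) ≠ 0 := by positivity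
      push_cast
      field_simp
  · rw [psiQ_of_odd h2, psiQ_of_odd (by omega), mul_zero]

/-- closed form: prefix-packing polynomial -/
def HQ (m : ℕ) (a w : ℤ) : ℚ :=
  ((a : ℚ) + w + 2) * ((a : ℚ) - w + 2) / 4 * (m.factorial : ℚ) * ((m + 2).factorial : ℚ)
    * psiQ ((m : ℤ) - a) * psiQ ((m : ℤ) + w + 2) * psiQ ((m : ℤ) - w + 2) * psiQ ((m : ℤ) + a + 4)

lemma HQ_symm (m : ℕ) (a w : ℤ) : HQ m a (-w) = HQ m a w := by
  unfold HQ
  rw [show (m : ℤ) + -w + 2 = m - w + 2 by ring, show (m : ℤ) - -w + 2 = m + w + 2 by ring]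
  push_cast
  ring

lemma keyH (m : ℕ) (a w : ℤ) :
    HQ (m + 1) (a + 1) (w + 1)
      = HQ m (a + 2) (w + 2) + HQ m (a + 2) w + HQ m a (w + 2) + HQ m a w := by
  unfold HQ
  rw [show ((m + 1 : ℕ) : ℤ) - (a + 1) = (m : ℤ) - a by push_cast; ring,
    show ((m + 1 : ℕ) : ℤ) + (w + 1) + 2 = (m : ℤ) + w + 4 by push_cast; ring,
    show ((m + 1 : ℕ) : ℤ) - (w + 1) + 2 = (m : ℤ) - w + 2 by push_cast; ring,
    show ((m + 1 : ℕ) : ℤ) + (a + 1) + 4 = (m : ℤ) + a + 6 by push_cast; ring,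
    show (m : ℤ) - (a + 2) = ((m : ℤ) - a) - 2 by ring,
    show (m : ℤ) + (w + 2) + 2 = (m : ℤ) + w + 4 by ring,
    show (m : ℤ) - (w + 2) + 2 = ((m : ℤ) - w + 2) - 2 by ring,
    show (m : ℤ) + (a + 2) + 4 = (m : ℤ) + a + 6 by ring,
    show (m : ℤ) + w + 2 = ((m : ℤ) + w + 4) - 2 by ring,
    show (m : ℤ) + a + 4 = ((m : ℤ) + a + 6) - 2 by ring,
    psiQ_down, psiQ_down, psiQ_down, psiQ_down]
  rw [show (m + 1 + 2) = (m + 2) + 1 by ring, Nat.factorial_succ (m + 2), Nat.factorial_succ m]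
  push_cast
  ring


/-- parity-corrected second argument -/
def wfix (m b : ℕ) : ℤ := if 2 ∣ (m + b) then (b : ℤ) else (b : ℤ) + 1

/-- closed form for the number of packing prefixes of length `m` with `D` ending at `a`,
`E` ending at `b` -/
def GQ (m a b : ℕ) : ℚ := HQ m (a : ℤ) (wfix m b)

lemma HQ_congr (m : ℕ) {a a' w w' : ℤ} (h1 : a = a') (h2 : w = w') :
    HQ m a w = HQ m a' w' := by rw [h1, h2]

lemma G1 (m a b : ℕ) :
    GQ (m + 1) (a + 1) (b + 1)
      = GQ m (a + 2) (b + 2) + GQ m (a + 2) b + GQ m a (b + 2) + GQ m a b := by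
  by_cases h : 2 ∣ (m + b)
  · have h1 : 2 ∣ (m + 1 + (b + 1)) := by omega
    have h2 : 2 ∣ (m + (b + 2)) := by omega
    simp only [GQ, wfix, if_pos h1, if_pos h2, if_pos h]
    have k := keyH m (a : ℤ) (b : ℤ)
    rw [HQ_congr (m+1) (by push_cast; ring : ((a+1 : ℕ) : ℤ) = (a : ℤ) + 1) (by push_cast; ring : ((b+1 : ℕ) : ℤ) = (b : ℤ) + 1),
      HQ_congr m (by push_cast; ring : ((a+2 : ℕ) : ℤ) = (a : ℤ) + 2) (by push_cast; ring : ((b+2 : ℕ) : ℤ) = (b : ℤ) + 2),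
      HQ_congr m (by push_cast; ring : ((a+2 : ℕ) : ℤ) = (a : ℤ) + 2) (rfl : (b : ℤ) = (b : ℤ)),
      HQ_congr m (rfl : (a : ℤ) = (a : ℤ)) (by push_cast; ring : ((b+2 : ℕ) : ℤ) = (b : ℤ) + 2)]
    exact k
  · have h1 : ¬ 2 ∣ (m + 1 + (b + 1)) := by omega
    have h2 : ¬ 2 ∣ (m + (b + 2)) := by omega
    simp only [GQ, wfix, if_neg h1, if_neg h2, if_neg h]
    have k := keyH m (a : ℤ) ((b : ℤ) + 1)
    rw [HQ_congr (m+1) (by push_cast; ring : ((a+1 : ℕ) : ℤ) = (a : ℤ) + 1) (by push_cast; ring : ((b+1 : ℕ) : ℤ) + 1 = ((b : ℤ) + 1) + 1),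
      HQ_congr m (by push_cast; ring : ((a+2 : ℕ) : ℤ) = (a : ℤ) + 2) (by push_cast; ring : ((b+2 : ℕ) : ℤ) + 1 = ((b : ℤ) + 1) + 2),
      HQ_congr m (by push_cast; ring : ((a+2 : ℕ) : ℤ) = (a : ℤ) + 2) (rfl : (b : ℤ) + 1 = (b : ℤ) + 1),
      HQ_congr m (rfl : (a : ℤ) = (a : ℤ)) (by push_cast; ring : ((b+2 : ℕ) : ℤ) + 1 = ((b : ℤ) + 1) + 2)]
    exact k

lemma G2 (m a : ℕ) :
    GQ (m + 1) (a + 1) 0 = GQ m (a + 2) 1 + GQ m (a + 2) 0 + GQ m a 1 + GQ m a 0 := by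
  by_cases h : 2 ∣ m
  · have h1 : ¬ 2 ∣ (m + 1 + 0) := by omega
    have h2 : ¬ 2 ∣ (m + 1) := by omega
    have h3 : 2 ∣ (m + 0) := by omega
    simp only [GQ, wfix, if_neg h1, if_neg h2, if_pos h3]
    have k := keyH m (a : ℤ) 0
    rw [HQ_congr (m+1) (by push_cast; ring : ((a+1 : ℕ) : ℤ) = (a : ℤ) + 1) (by norm_num : ((0:ℕ) : ℤ) + 1 = (0 : ℤ) + 1),
      HQ_congr m (by push_cast; ring : ((a+2 : ℕ) : ℤ) = (a : ℤ) + 2) (by norm_num : ((1:ℕ) : ℤ) + 1 = (0 : ℤ) + 2),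
      HQ_congr m (by push_cast; ring : ((a+2 : ℕ) : ℤ) = (a : ℤ) + 2) (by norm_num : ((0:ℕ) : ℤ) = (0 : ℤ)),
      HQ_congr m (rfl : (a : ℤ) = (a : ℤ)) (by norm_num : ((1:ℕ) : ℤ) + 1 = (0 : ℤ) + 2),
      HQ_congr m (rfl : (a : ℤ) = (a : ℤ)) (by norm_num : ((0:ℕ) : ℤ) = (0 : ℤ))]
    exact k
  · have h1 : 2 ∣ (m + 1 + 0) := by omega
    have h2 : 2 ∣ (m + 1) := by omega
    have h3 : ¬ 2 ∣ (m + 0) := by omega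
    simp only [GQ, wfix, if_pos h1, if_pos h2, if_neg h3]
    have k := keyH m (a : ℤ) (-1)
    rw [show (-1 : ℤ) + 1 = ((0:ℕ) : ℤ) by norm_num, show (-1 : ℤ) + 2 = ((1:ℕ) : ℤ) by norm_num] at k
    rw [show ((-1 : ℤ)) = -(((1:ℕ)) : ℤ) by norm_num, HQ_symm, HQ_symm] at k
    rw [HQ_congr (m+1) (by push_cast; ring : ((a+1 : ℕ) : ℤ) = (a : ℤ) + 1) (rfl : ((0:ℕ) : ℤ) = ((0:ℕ) : ℤ)),
      HQ_congr m (by push_cast; ring : ((a+2 : ℕ) : ℤ) = (a : ℤ) + 2) (rfl : ((1:ℕ) : ℤ) = ((1:ℕ) : ℤ)),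
      HQ_congr m (by push_cast; ring : ((a+2 : ℕ) : ℤ) = (a : ℤ) + 2) (by norm_num : ((0:ℕ) : ℤ) + 1 = ((1:ℕ) : ℤ)),
      HQ_congr m (rfl : (a : ℤ) = (a : ℤ)) (rfl : ((1:ℕ) : ℤ) = ((1:ℕ) : ℤ)),
      HQ_congr m (rfl : (a : ℤ) = (a : ℤ)) (by norm_num : ((0:ℕ) : ℤ) + 1 = ((1:ℕ) : ℤ))]
    exact k

lemma HQ_neg_one_w (m : ℕ) (w : ℤ) (hw : w = 1 ∨ w = -1) : HQ m (-1) w = 0 := by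
  rcases hw with rfl | rfl <;> · unfold HQ; push_cast; ring

lemma G3 (m : ℕ) : GQ (m + 1) 0 0 = GQ m 1 1 + GQ m 1 0 := by
  by_cases h : 2 ∣ m
  · have h1 : ¬ 2 ∣ (m + 1 + 0) := by omega
    have h2 : ¬ 2 ∣ (m + 1) := by omega
    have h3 : 2 ∣ (m + 0) := by omega
    simp only [GQ, wfix, if_neg h1, if_neg h2, if_pos h3]
    have k := keyH m (-1) 0
    have z2 : HQ m (-1) ((0 : ℤ) + 2) = 0 := by
      unfold HQ
      rw [show ((m : ℤ)) - (-1) = (m : ℤ) + 1 by ring, psiQ_of_odd (by omega : ¬ (2 : ℤ) ∣ ((m : ℤ) + 1))]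
      ring
    have z0 : HQ m (-1) 0 = 0 := by
      unfold HQ
      rw [show ((m : ℤ)) - (-1) = (m : ℤ) + 1 by ring, psiQ_of_odd (by omega : ¬ (2 : ℤ) ∣ ((m : ℤ) + 1))]
      ring
    rw [z2, z0] at k
    rw [HQ_congr (m+1) (by norm_num : ((0 : ℕ) : ℤ) = (-1 : ℤ) + 1) (by norm_num : ((0:ℕ) : ℤ) + 1 = (0 : ℤ) + 1),
      HQ_congr m (by norm_num : ((1 : ℕ) : ℤ) = (-1 : ℤ) + 2) (by norm_num : ((1:ℕ) : ℤ) + 1 = (0 : ℤ) + 2),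
      HQ_congr m (by norm_num : ((1 : ℕ) : ℤ) = (-1 : ℤ) + 2) (by norm_num : ((0:ℕ) : ℤ) = (0 : ℤ))]
    rw [k]; ring
  · have h1 : 2 ∣ (m + 1 + 0) := by omega
    have h2 : 2 ∣ (m + 1) := by omega
    have h3 : ¬ 2 ∣ (m + 0) := by omega
    simp only [GQ, wfix, if_pos h1, if_pos h2, if_neg h3]
    have k := keyH m (-1) (-1)
    have z1 : HQ m (-1) ((-1 : ℤ) + 2) = 0 := HQ_neg_one_w m _ (by norm_num)
    have z2 : HQ m (-1) (-1 : ℤ) = 0 := HQ_neg_one_w m _ (by norm_num)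
    rw [z1, z2] at k
    have s1 : HQ m ((-1 : ℤ) + 2) (-1 : ℤ) = HQ m ((-1 : ℤ) + 2) 1 := by
      rw [show (-1 : ℤ) = -(1 : ℤ) by norm_num, HQ_symm]
    rw [s1] at k
    rw [HQ_congr (m+1) (by norm_num : ((0 : ℕ) : ℤ) = (-1 : ℤ) + 1) (by norm_num : ((0:ℕ) : ℤ) = (-1 : ℤ) + 1),
      HQ_congr m (by norm_num : ((1 : ℕ) : ℤ) = (-1 : ℤ) + 2) (by norm_num : ((1:ℕ) : ℤ) = (1 : ℤ)),
      HQ_congr m (by norm_num : ((1 : ℕ) : ℤ) = (-1 : ℤ) + 2) (by norm_num : ((0:ℕ) : ℤ) + 1 = (1 : ℤ))]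
    rw [k]; ring

lemma GQ_gt₁ (m a : ℕ) : GQ m a (a + 1) = 0 := by
  by_cases h : 2 ∣ (m + (a + 1))
  · simp only [GQ, wfix, if_pos h]
    unfold HQ
    rw [psiQ_of_odd (by omega : ¬ (2 : ℤ) ∣ ((m : ℤ) - (a : ℤ)))]
    ring
  · simp only [GQ, wfix, if_neg h]
    unfold HQ
    push_cast
    ring

lemma GQ_gt₂ (m a : ℕ) : GQ m a (a + 2) = 0 := by
  by_cases h : 2 ∣ (m + (a + 2))
  · simp only [GQ, wfix, if_pos h]
    unfold HQ
    push_cast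
    ring
  · simp only [GQ, wfix, if_neg h]
    unfold HQ
    rw [psiQ_of_odd (by omega : ¬ (2 : ℤ) ∣ ((m : ℤ) - (a : ℤ)))]
    ring

lemma GQ_gt {m a b : ℕ} (h1 : a < b) (h2 : b ≤ a + 2) : GQ m a b = 0 := by
  rcases (by omega : b = a + 1 ∨ b = a + 2) with rfl | rfl
  · exact GQ_gt₁ m a
  · exact GQ_gt₂ m a

lemma psiQ_zero : psiQ 0 = 1 := by
  have := psiQ_two_mul 0; norm_num at this; exact this

lemma psiQ_two : psiQ 2 = 1 := by
  have := psiQ_two_mul 1; norm_num [Nat.factorial] at this; exact this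

lemma psiQ_four : psiQ 4 = 1/2 := by
  have := psiQ_two_mul 2; norm_num [Nat.factorial] at this; exact this

lemma GQ_zero_zero : GQ 0 0 0 = 1 := by
  simp only [GQ, wfix, if_pos (by omega : 2 ∣ (0 + 0))]
  unfold HQ
  norm_num
  rw [psiQ_zero, psiQ_two, psiQ_four]
  norm_num [Nat.factorial]

lemma GQ_zero_pos (a b : ℕ) (h : 0 < a) : GQ 0 a b = 0 := by
  have : psiQ (((0:ℕ) : ℤ) - (a : ℤ)) = 0 := psiQ_of_neg (by omega)
  unfold GQ HQ
  rw [this]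
  ring

lemma cat_fact (n : ℕ) :
    (catalan n : ℚ) * (n.factorial : ℚ) * ((n+1).factorial : ℚ) = (((2*n).factorial : ℕ) : ℚ) := by
  have h1 : (n + 1) * catalan n = n.centralBinom := succ_mul_catalan_eq_centralBinom n
  have h2 : n.centralBinom * n.factorial * n.factorial = (2*n).factorial := by
    have := Nat.choose_mul_factorial_mul_factorial (by omega : n ≤ 2*n)
    rwa [show 2*n - n = n by omega] at this
  have : catalan n * n.factorial * ((n+1) * n.factorial) = (2*n).factorial := by
    rw [← h2, ← h1]; ring
  rw [← this]
  rw [Nat.factorial_succ]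
  push_cast
  ring

lemma GQ_final (n : ℕ) : GQ (2*n) 0 0 = (catalan n : ℚ) * (catalan (n+1) : ℚ) := by
  simp only [GQ, wfix, if_pos (by omega : 2 ∣ (2*n + 0))]
  unfold HQ
  rw [show (((2*n:ℕ)) : ℤ) - ((0:ℕ) : ℤ) + 2 = (2 : ℤ) * ((n+1 : ℕ) : ℕ) by push_cast; ring,
    show (((2*n:ℕ)) : ℤ) + ((0:ℕ) : ℤ) + 4 = (2 : ℤ) * ((n+2 : ℕ) : ℕ) by push_cast; ring,
    show (((2*n:ℕ)) : ℤ) + ((0:ℕ) : ℤ) + 2 = (2 : ℤ) * ((n+1 : ℕ) : ℕ) by push_cast; ring,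
    show (((2*n:ℕ)) : ℤ) - ((0:ℕ) : ℤ) = (2 : ℤ) * (n : ℕ) by push_cast; ring,
    psiQ_two_mul, psiQ_two_mul, psiQ_two_mul]
  have A := cat_fact n
  have B := cat_fact (n+1)
  rw [show 2*(n+1) = 2*n + 2 by ring] at B
  have hA : (catalan n : ℚ) = (((2*n).factorial : ℕ) : ℚ) / ((n.factorial : ℚ) * ((n+1).factorial : ℚ)) := by
    rw [eq_div_iff (by positivity)]
    linear_combination A
  have hB : (catalan (n+1) : ℚ) = (((2*n+2).factorial : ℕ) : ℚ) / (((n+1).factorial : ℚ) * ((n+2).factorial : ℚ)) := by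
    rw [eq_div_iff (by positivity)]
    linear_combination B
  rw [hA, hB]
  have hn : (n.factorial : ℚ) ≠ 0 := by positivity
  have hn1 : ((n+1).factorial : ℚ) ≠ 0 := by positivity
  have hn2 : ((n+2).factorial : ℚ) ≠ 0 := by positivity
  field_simp
  ring



/-- packing prefixes of length `m`: `D` ends at `a`, `E` ends at `b` -/
@[reducible] def Pk (m a b : ℕ) (p : (Fin (m+1) → ℕ) × (Fin (m+1) → ℕ)) : Prop :=
  p.1 0 = 0 ∧ p.2 0 = 0 ∧
  (∀ i : Fin m, p.1 i.succ = p.1 i.castSucc + 1 ∨ p.1 i.castSucc = p.1 i.succ + 1) ∧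
  (∀ i : Fin m, p.2 i.succ = p.2 i.castSucc + 1 ∨ p.2 i.castSucc = p.2 i.succ + 1 ∨
    (p.2 i.succ = p.2 i.castSucc ∧ p.2 i.castSucc = 0)) ∧
  (∀ i, p.2 i ≤ p.1 i) ∧ p.1 (Fin.last m) = a ∧ p.2 (Fin.last m) = b

def cN (m a b : ℕ) : ℕ := Nat.card {p // Pk m a b p}

lemma Pk_fst_le {m a b : ℕ} {p} (h : Pk m a b p) (i : Fin (m+1)) : p.1 i ≤ i.val := by
  obtain ⟨h1, -, hs, -, -, -, -⟩ := h
  induction i using Fin.induction with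
  | zero => simp [h1]
  | succ j ih =>
      have := hs j
      have hv : (j.castSucc : Fin (m+1)).val = j.val := Fin.coe_castSucc j
      have hv2 : (j.succ : Fin (m+1)).val = j.val + 1 := Fin.val_succ j
      omega

lemma Pk_finite (m a b : ℕ) : Finite {p // Pk m a b p} := by
  have bnd : ∀ (q : {p // Pk m a b p}) (i : Fin (m+1)), q.1.1 i < m + 1 ∧ q.1.2 i < m + 1 := by
    intro q i
    have h1 := Pk_fst_le q.2 i
    have h2 := q.2.2.2.2.2.1 i
    have := i.isLt
    omega
  refine Finite.of_injective
    (fun q => ((fun i => (⟨q.1.1 i, (bnd q i).1⟩ : Fin (m+1))),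
               (fun i => (⟨q.1.2 i, (bnd q i).2⟩ : Fin (m+1))))
      : {p // Pk m a b p} → (Fin (m+1) → Fin (m+1)) × (Fin (m+1) → Fin (m+1))) ?_
  intro u v huv
  have h1 := congrArg Prod.fst huv
  have h2 := congrArg Prod.snd huv
  simp only [] at h1 h2
  apply Subtype.ext
  apply Prod.ext
  · funext i; exact congrArg Fin.val (congrFun h1 i)
  · funext i; exact congrArg Fin.val (congrFun h2 i)

lemma card_subtype_congr {α : Type*} {P Q : α → Prop} (h : ∀ x, P x ↔ Q x) :
    Nat.card {x // P x} = Nat.card {x // Q x} :=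
  Nat.card_congr (Equiv.subtypeEquivRight h)

lemma inj_val {α : Type*} {P Q : α → Prop} :
    Function.Injective (fun y : {x // P x ∧ Q x} => (⟨y.1, y.2.1⟩ : {x // P x})) := by
  intro u v h
  apply Subtype.ext
  have := congrArg Subtype.val h
  simpa using this

lemma card_split {α : Type*} (P C : α → Prop) (hF : Finite {x // P x}) :
    Nat.card {x // P x} = Nat.card {x // P x ∧ C x} + Nat.card {x // P x ∧ ¬ C x} := by
  classical
  haveI := hF
  haveI : Finite {x // P x ∧ C x} := Finite.of_injective _ (inj_val (P := P) (Q := C))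
  haveI : Finite {x // P x ∧ ¬ C x} := Finite.of_injective _ (inj_val (P := P) (Q := fun x => ¬ C x))
  have e : ({x // P x ∧ C x} ⊕ {x // P x ∧ ¬ C x}) ≃ {x // P x} :=
    ((Equiv.subtypeSubtypeEquivSubtypeInter P C).symm.sumCongr
      (Equiv.subtypeSubtypeEquivSubtypeInter P (fun x => ¬ C x)).symm).trans
      (Equiv.sumCompl (fun y : {x // P x} => C y.1))
  rw [← Nat.card_congr e, Nat.card_sum]

/-- the one-step extension bijection -/
lemma card_atom (m a b a' b' : ℕ)
    (hD : a = a' + 1 ∨ a' = a + 1)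
    (hE : b = b' + 1 ∨ b' = b + 1 ∨ (b = b' ∧ b' = 0))
    (hba : b ≤ a) :
    Nat.card {p // Pk (m+1) a b p ∧
      p.1 (Fin.castSucc (Fin.last m)) = a' ∧ p.2 (Fin.castSucc (Fin.last m)) = b'}
      = cN m a' b' := by
  apply Nat.card_congr
  refine ⟨fun q => ⟨(Fin.init q.1.1, Fin.init q.1.2), ?_⟩,
          fun q => ⟨(Fin.snoc q.1.1 a, Fin.snoc q.1.2 b), ?_⟩, ?_, ?_⟩
  · obtain ⟨⟨h1, h2, hs1, hs2, hle, -, -⟩, hA, hB⟩ := q.2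
    refine ⟨?_, ?_, ?_, ?_, ?_, hA, hB⟩
    · show q.1.1 (Fin.castSucc 0) = 0
      rw [Fin.castSucc_zero]; exact h1
    · show q.1.2 (Fin.castSucc 0) = 0
      rw [Fin.castSucc_zero]; exact h2
    · intro j
      have := hs1 (Fin.castSucc j)
      rwa [Fin.succ_castSucc] at this
    · intro j
      have := hs2 (Fin.castSucc j)
      rwa [Fin.succ_castSucc] at this
    · intro j; exact hle (Fin.castSucc j)
  · obtain ⟨h1, h2, hs1, hs2, hle, hA, hB⟩ := q.2
    set D' : Fin (m+1+1) → ℕ := Fin.snoc q.1.1 a with hD'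
    set E' : Fin (m+1+1) → ℕ := Fin.snoc q.1.2 b with hE'
    have sD1 : ∀ j : Fin (m+1), D' (Fin.castSucc j) = q.1.1 j := by
      intro j; rw [hD', Fin.snoc_castSucc]
    have sD2 : D' (Fin.last (m+1)) = a := by rw [hD', Fin.snoc_last]
    have sE1 : ∀ j : Fin (m+1), E' (Fin.castSucc j) = q.1.2 j := by
      intro j; rw [hE', Fin.snoc_castSucc]
    have sE2 : E' (Fin.last (m+1)) = b := by rw [hE', Fin.snoc_last]
    have c0 : (0 : Fin (m+1+1)) = Fin.castSucc 0 := by ext; simp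
    have v1 : D' 0 = 0 := by rw [c0, sD1]; exact h1
    have v2 : E' 0 = 0 := by rw [c0, sE1]; exact h2
    have v3 : ∀ i : Fin (m+1), D' i.succ = D' i.castSucc + 1 ∨
        D' i.castSucc = D' i.succ + 1 := by
      intro i
      refine Fin.lastCases ?_ (fun j => ?_) i
      · rw [Fin.succ_last, sD2, sD1, hA]
        omega
      · rw [Fin.succ_castSucc, sD1, sD1]
        exact hs1 j
    have v4 : ∀ i : Fin (m+1), E' i.succ = E' i.castSucc + 1 ∨
        E' i.castSucc = E' i.succ + 1 ∨
        (E' i.succ = E' i.castSucc ∧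
          E' i.castSucc = 0) := by
      intro i
      refine Fin.lastCases ?_ (fun j => ?_) i
      · rw [Fin.succ_last, sE2, sE1, hB]
        rcases hE with h | h | h
        · left; omega
        · right; left; omega
        · right; right; omega
      · rw [Fin.succ_castSucc, sE1, sE1]
        exact hs2 j
    have v5 : ∀ i : Fin (m+1+1), E' i ≤ D' i := by
      intro i
      refine Fin.lastCases ?_ (fun j => ?_) i
      · rw [sD2, sE2]; exact hba
      · rw [sD1, sE1]; exact hle j
    have v6 : D' (Fin.last (m+1)) = a := sD2
    have v7 : E' (Fin.last (m+1)) = b := sE2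
    have v8 : D' (Fin.castSucc (Fin.last m)) = a' := by
      rw [sD1]; exact hA
    have v9 : E' (Fin.castSucc (Fin.last m)) = b' := by
      rw [sE1]; exact hB
    exact ⟨⟨v1, v2, v3, v4, v5, v6, v7⟩, v8, v9⟩
  · intro q
    apply Subtype.ext
    have hA : q.1.1 (Fin.last (m+1)) = a := q.2.1.2.2.2.2.2.1
    have hB : q.1.2 (Fin.last (m+1)) = b := q.2.1.2.2.2.2.2.2
    apply Prod.ext
    · show Fin.snoc (Fin.init q.1.1) a = q.1.1
      have h := Fin.snoc_init_self q.1.1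
      rw [hA] at h
      exact h
    · show Fin.snoc (Fin.init q.1.2) b = q.1.2
      have h := Fin.snoc_init_self q.1.2
      rw [hB] at h
      exact h
  · intro q
    apply Subtype.ext
    apply Prod.ext
    · show Fin.init (Fin.snoc q.1.1 a : Fin (m+1+1) → ℕ) = q.1.1
      simp
    · show Fin.init (Fin.snoc q.1.2 b : Fin (m+1+1) → ℕ) = q.1.2
      simp

lemma D_pre {m a b : ℕ} {p} (h : Pk (m+1) a b p) :
    p.1 (Fin.castSucc (Fin.last m)) + 1 = a ∨ p.1 (Fin.castSucc (Fin.last m)) = a + 1 := by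
  have hs := h.2.2.1 (Fin.last m)
  have hA : p.1 (Fin.last (m+1)) = a := h.2.2.2.2.2.1
  rw [Fin.succ_last, hA] at hs
  omega

lemma E_pre {m a b : ℕ} {p} (h : Pk (m+1) a b p) :
    p.2 (Fin.castSucc (Fin.last m)) + 1 = b ∨ p.2 (Fin.castSucc (Fin.last m)) = b + 1 ∨
      (b = p.2 (Fin.castSucc (Fin.last m)) ∧ p.2 (Fin.castSucc (Fin.last m)) = 0) := by
  have hs := h.2.2.2.1 (Fin.last m)
  have hB : p.2 (Fin.last (m+1)) = b := h.2.2.2.2.2.2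
  rw [Fin.succ_last, hB] at hs
  omega

lemma L0 (m a b : ℕ) (h : a < b) : cN m a b = 0 := by
  have : IsEmpty {p // Pk m a b p} := by
    constructor
    rintro ⟨p, hp⟩
    have h1 := hp.2.2.2.2.1 (Fin.last m)
    have hA : p.1 (Fin.last m) = a := hp.2.2.2.2.2.1
    have hB : p.2 (Fin.last m) = b := hp.2.2.2.2.2.2
    omega
  exact Nat.card_of_isEmpty

lemma L1 (m a b : ℕ) (hba : b ≤ a) :
    cN (m+1) (a+1) (b+1) = cN m (a+2) (b+2) + cN m (a+2) b + cN m a (b+2) + cN m a b := by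
  classical
  have hF := Pk_finite (m+1) (a+1) (b+1)
  have hF1 : Finite {p // Pk (m+1) (a+1) (b+1) p ∧ p.1 (Fin.castSucc (Fin.last m)) = a + 2} :=
    Finite.of_injective _ inj_val
  have hF2 : Finite {p // Pk (m+1) (a+1) (b+1) p ∧ ¬ p.1 (Fin.castSucc (Fin.last m)) = a + 2} :=
    Finite.of_injective _ inj_val
  have s0 := card_split (Pk (m+1) (a+1) (b+1))
    (fun p => p.1 (Fin.castSucc (Fin.last m)) = a + 2) hF
  have s1 := card_split (fun p => Pk (m+1) (a+1) (b+1) p ∧ p.1 (Fin.castSucc (Fin.last m)) = a + 2)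
    (fun p => p.2 (Fin.castSucc (Fin.last m)) = b + 2) hF1
  have s2 := card_split (fun p => Pk (m+1) (a+1) (b+1) p ∧ ¬ p.1 (Fin.castSucc (Fin.last m)) = a + 2)
    (fun p => p.2 (Fin.castSucc (Fin.last m)) = b + 2) hF2
  have e1 : Nat.card {p // (Pk (m+1) (a+1) (b+1) p ∧ p.1 (Fin.castSucc (Fin.last m)) = a + 2)
        ∧ p.2 (Fin.castSucc (Fin.last m)) = b + 2} = cN m (a+2) (b+2) := by
    have hiff : ∀ p, ((Pk (m+1) (a+1) (b+1) p ∧ p.1 (Fin.castSucc (Fin.last m)) = a + 2)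
        ∧ p.2 (Fin.castSucc (Fin.last m)) = b + 2) ↔
        (Pk (m+1) (a+1) (b+1) p ∧ p.1 (Fin.castSucc (Fin.last m)) = a + 2 ∧
          p.2 (Fin.castSucc (Fin.last m)) = b + 2) := by
      intro p
      constructor
      · rintro ⟨⟨hp, hD⟩, hE⟩; exact ⟨hp, hD, hE⟩
      · rintro ⟨hp, hD, hE⟩; exact ⟨⟨hp, hD⟩, hE⟩
    rw [card_subtype_congr hiff]
    exact card_atom m (a+1) (b+1) (a+2) (b+2) (by omega) (by omega) (by omega)
  have e2 : Nat.card {p // (Pk (m+1) (a+1) (b+1) p ∧ p.1 (Fin.castSucc (Fin.last m)) = a + 2)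
        ∧ ¬ p.2 (Fin.castSucc (Fin.last m)) = b + 2} = cN m (a+2) b := by
    have hiff : ∀ p, ((Pk (m+1) (a+1) (b+1) p ∧ p.1 (Fin.castSucc (Fin.last m)) = a + 2)
        ∧ ¬ p.2 (Fin.castSucc (Fin.last m)) = b + 2) ↔
        (Pk (m+1) (a+1) (b+1) p ∧ p.1 (Fin.castSucc (Fin.last m)) = a + 2 ∧
          p.2 (Fin.castSucc (Fin.last m)) = b) := by
      intro p
      constructor
      · rintro ⟨⟨hp, hD⟩, hE⟩
        have := E_pre hp
        exact ⟨hp, hD, by omega⟩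
      · rintro ⟨hp, hD, hE⟩
        exact ⟨⟨hp, hD⟩, by omega⟩
    rw [card_subtype_congr hiff]
    exact card_atom m (a+1) (b+1) (a+2) b (by omega) (by omega) (by omega)
  have e3 : Nat.card {p // (Pk (m+1) (a+1) (b+1) p ∧ ¬ p.1 (Fin.castSucc (Fin.last m)) = a + 2)
        ∧ p.2 (Fin.castSucc (Fin.last m)) = b + 2} = cN m a (b+2) := by
    have hiff : ∀ p, ((Pk (m+1) (a+1) (b+1) p ∧ ¬ p.1 (Fin.castSucc (Fin.last m)) = a + 2)
        ∧ p.2 (Fin.castSucc (Fin.last m)) = b + 2) ↔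
        (Pk (m+1) (a+1) (b+1) p ∧ p.1 (Fin.castSucc (Fin.last m)) = a ∧
          p.2 (Fin.castSucc (Fin.last m)) = b + 2) := by
      intro p
      constructor
      · rintro ⟨⟨hp, hD⟩, hE⟩
        have := D_pre hp
        exact ⟨hp, by omega, hE⟩
      · rintro ⟨hp, hD, hE⟩
        exact ⟨⟨hp, by omega⟩, hE⟩
    rw [card_subtype_congr hiff]
    exact card_atom m (a+1) (b+1) a (b+2) (by omega) (by omega) (by omega)
  have e4 : Nat.card {p // (Pk (m+1) (a+1) (b+1) p ∧ ¬ p.1 (Fin.castSucc (Fin.last m)) = a + 2)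
        ∧ ¬ p.2 (Fin.castSucc (Fin.last m)) = b + 2} = cN m a b := by
    have hiff : ∀ p, ((Pk (m+1) (a+1) (b+1) p ∧ ¬ p.1 (Fin.castSucc (Fin.last m)) = a + 2)
        ∧ ¬ p.2 (Fin.castSucc (Fin.last m)) = b + 2) ↔
        (Pk (m+1) (a+1) (b+1) p ∧ p.1 (Fin.castSucc (Fin.last m)) = a ∧
          p.2 (Fin.castSucc (Fin.last m)) = b) := by
      intro p
      constructor
      · rintro ⟨⟨hp, hD⟩, hE⟩
        have h1 := D_pre hp
        have h2 := E_pre hp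
        exact ⟨hp, by omega, by omega⟩
      · rintro ⟨hp, hD, hE⟩
        exact ⟨⟨hp, by omega⟩, by omega⟩
    rw [card_subtype_congr hiff]
    exact card_atom m (a+1) (b+1) a b (by omega) (by omega) (by omega)
  show Nat.card {p // Pk (m+1) (a+1) (b+1) p} = _
  rw [e1, e2] at s1
  rw [e3, e4] at s2
  rw [s1, s2] at s0
  rw [s0]
  omega

lemma L2 (m a : ℕ) :
    cN (m+1) (a+1) 0 = cN m (a+2) 1 + cN m (a+2) 0 + cN m a 1 + cN m a 0 := by
  classical
  have hF := Pk_finite (m+1) (a+1) 0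
  have hF1 : Finite {p // Pk (m+1) (a+1) 0 p ∧ p.1 (Fin.castSucc (Fin.last m)) = a + 2} :=
    Finite.of_injective _ inj_val
  have hF2 : Finite {p // Pk (m+1) (a+1) 0 p ∧ ¬ p.1 (Fin.castSucc (Fin.last m)) = a + 2} :=
    Finite.of_injective _ inj_val
  have s0 := card_split (Pk (m+1) (a+1) 0)
    (fun p => p.1 (Fin.castSucc (Fin.last m)) = a + 2) hF
  have s1 := card_split (fun p => Pk (m+1) (a+1) 0 p ∧ p.1 (Fin.castSucc (Fin.last m)) = a + 2)
    (fun p => p.2 (Fin.castSucc (Fin.last m)) = 1) hF1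
  have s2 := card_split (fun p => Pk (m+1) (a+1) 0 p ∧ ¬ p.1 (Fin.castSucc (Fin.last m)) = a + 2)
    (fun p => p.2 (Fin.castSucc (Fin.last m)) = 1) hF2
  have e1 : Nat.card {p // (Pk (m+1) (a+1) 0 p ∧ p.1 (Fin.castSucc (Fin.last m)) = a + 2)
        ∧ p.2 (Fin.castSucc (Fin.last m)) = 1} = cN m (a+2) 1 := by
    have hiff : ∀ p, ((Pk (m+1) (a+1) 0 p ∧ p.1 (Fin.castSucc (Fin.last m)) = a + 2)
        ∧ p.2 (Fin.castSucc (Fin.last m)) = 1) ↔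
        (Pk (m+1) (a+1) 0 p ∧ p.1 (Fin.castSucc (Fin.last m)) = a + 2 ∧
          p.2 (Fin.castSucc (Fin.last m)) = 1) := by
      intro p
      constructor
      · rintro ⟨⟨hp, hD⟩, hE⟩; exact ⟨hp, hD, hE⟩
      · rintro ⟨hp, hD, hE⟩; exact ⟨⟨hp, hD⟩, hE⟩
    rw [card_subtype_congr hiff]
    exact card_atom m (a+1) 0 (a+2) 1 (by omega) (by omega) (by omega)
  have e2 : Nat.card {p // (Pk (m+1) (a+1) 0 p ∧ p.1 (Fin.castSucc (Fin.last m)) = a + 2)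
        ∧ ¬ p.2 (Fin.castSucc (Fin.last m)) = 1} = cN m (a+2) 0 := by
    have hiff : ∀ p, ((Pk (m+1) (a+1) 0 p ∧ p.1 (Fin.castSucc (Fin.last m)) = a + 2)
        ∧ ¬ p.2 (Fin.castSucc (Fin.last m)) = 1) ↔
        (Pk (m+1) (a+1) 0 p ∧ p.1 (Fin.castSucc (Fin.last m)) = a + 2 ∧
          p.2 (Fin.castSucc (Fin.last m)) = 0) := by
      intro p
      constructor
      · rintro ⟨⟨hp, hD⟩, hE⟩
        have := E_pre hp
        exact ⟨hp, hD, by omega⟩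
      · rintro ⟨hp, hD, hE⟩
        exact ⟨⟨hp, hD⟩, by omega⟩
    rw [card_subtype_congr hiff]
    exact card_atom m (a+1) 0 (a+2) 0 (by omega) (by omega) (by omega)
  have e3 : Nat.card {p // (Pk (m+1) (a+1) 0 p ∧ ¬ p.1 (Fin.castSucc (Fin.last m)) = a + 2)
        ∧ p.2 (Fin.castSucc (Fin.last m)) = 1} = cN m a 1 := by
    have hiff : ∀ p, ((Pk (m+1) (a+1) 0 p ∧ ¬ p.1 (Fin.castSucc (Fin.last m)) = a + 2)
        ∧ p.2 (Fin.castSucc (Fin.last m)) = 1) ↔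
        (Pk (m+1) (a+1) 0 p ∧ p.1 (Fin.castSucc (Fin.last m)) = a ∧
          p.2 (Fin.castSucc (Fin.last m)) = 1) := by
      intro p
      constructor
      · rintro ⟨⟨hp, hD⟩, hE⟩
        have := D_pre hp
        exact ⟨hp, by omega, hE⟩
      · rintro ⟨hp, hD, hE⟩
        exact ⟨⟨hp, by omega⟩, hE⟩
    rw [card_subtype_congr hiff]
    exact card_atom m (a+1) 0 a 1 (by omega) (by omega) (by omega)
  have e4 : Nat.card {p // (Pk (m+1) (a+1) 0 p ∧ ¬ p.1 (Fin.castSucc (Fin.last m)) = a + 2)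
        ∧ ¬ p.2 (Fin.castSucc (Fin.last m)) = 1} = cN m a 0 := by
    have hiff : ∀ p, ((Pk (m+1) (a+1) 0 p ∧ ¬ p.1 (Fin.castSucc (Fin.last m)) = a + 2)
        ∧ ¬ p.2 (Fin.castSucc (Fin.last m)) = 1) ↔
        (Pk (m+1) (a+1) 0 p ∧ p.1 (Fin.castSucc (Fin.last m)) = a ∧
          p.2 (Fin.castSucc (Fin.last m)) = 0) := by
      intro p
      constructor
      · rintro ⟨⟨hp, hD⟩, hE⟩
        have h1 := D_pre hp
        have h2 := E_pre hp
        exact ⟨hp, by omega, by omega⟩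
      · rintro ⟨hp, hD, hE⟩
        exact ⟨⟨hp, by omega⟩, by omega⟩
    rw [card_subtype_congr hiff]
    exact card_atom m (a+1) 0 a 0 (by omega) (by omega) (by omega)
  show Nat.card {p // Pk (m+1) (a+1) 0 p} = _
  rw [e1, e2] at s1
  rw [e3, e4] at s2
  rw [s1, s2] at s0
  rw [s0]
  omega

lemma L3 (m : ℕ) : cN (m+1) 0 0 = cN m 1 1 + cN m 1 0 := by
  classical
  have hD1 : ∀ p, Pk (m+1) 0 0 p ↔ (Pk (m+1) 0 0 p ∧ p.1 (Fin.castSucc (Fin.last m)) = 1) := by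
    intro p
    constructor
    · intro hp
      have := D_pre hp
      exact ⟨hp, by omega⟩
    · exact fun h => h.1
  have h0 : cN (m+1) 0 0 = Nat.card {p // Pk (m+1) 0 0 p ∧ p.1 (Fin.castSucc (Fin.last m)) = 1} :=
    card_subtype_congr hD1
  haveI := Pk_finite (m+1) 0 0
  have hF1 : Finite {p // Pk (m+1) 0 0 p ∧ p.1 (Fin.castSucc (Fin.last m)) = 1} :=
    Finite.of_injective _ inj_val
  have s1 := card_split (fun p => Pk (m+1) 0 0 p ∧ p.1 (Fin.castSucc (Fin.last m)) = 1)
    (fun p => p.2 (Fin.castSucc (Fin.last m)) = 1) hF1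
  have e1 : Nat.card {p // (Pk (m+1) 0 0 p ∧ p.1 (Fin.castSucc (Fin.last m)) = 1)
        ∧ p.2 (Fin.castSucc (Fin.last m)) = 1} = cN m 1 1 := by
    have hiff : ∀ p, ((Pk (m+1) 0 0 p ∧ p.1 (Fin.castSucc (Fin.last m)) = 1)
        ∧ p.2 (Fin.castSucc (Fin.last m)) = 1) ↔
        (Pk (m+1) 0 0 p ∧ p.1 (Fin.castSucc (Fin.last m)) = 1 ∧
          p.2 (Fin.castSucc (Fin.last m)) = 1) := by
      intro p
      constructor
      · rintro ⟨⟨hp, hD⟩, hE⟩; exact ⟨hp, hD, hE⟩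
      · rintro ⟨hp, hD, hE⟩; exact ⟨⟨hp, hD⟩, hE⟩
    rw [card_subtype_congr hiff]
    exact card_atom m 0 0 1 1 (by omega) (by omega) (by omega)
  have e2 : Nat.card {p // (Pk (m+1) 0 0 p ∧ p.1 (Fin.castSucc (Fin.last m)) = 1)
        ∧ ¬ p.2 (Fin.castSucc (Fin.last m)) = 1} = cN m 1 0 := by
    have hiff : ∀ p, ((Pk (m+1) 0 0 p ∧ p.1 (Fin.castSucc (Fin.last m)) = 1)
        ∧ ¬ p.2 (Fin.castSucc (Fin.last m)) = 1) ↔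
        (Pk (m+1) 0 0 p ∧ p.1 (Fin.castSucc (Fin.last m)) = 1 ∧
          p.2 (Fin.castSucc (Fin.last m)) = 0) := by
      intro p
      constructor
      · rintro ⟨⟨hp, hD⟩, hE⟩
        have := E_pre hp
        exact ⟨hp, hD, by omega⟩
      · rintro ⟨hp, hD, hE⟩
        exact ⟨⟨hp, hD⟩, by omega⟩
    rw [card_subtype_congr hiff]
    exact card_atom m 0 0 1 0 (by omega) (by omega) (by omega)
  rw [e1, e2] at s1
  rw [h0, s1]

lemma cN000 : cN 0 0 0 = 1 := by
  have hu : ∀ q : {p // Pk 0 0 0 p}, q = ⟨((fun _ => 0), (fun _ => 0)),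
      ⟨rfl, rfl, fun i => i.elim0, fun i => i.elim0, fun _ => le_refl 0, rfl, rfl⟩⟩ := by
    rintro ⟨⟨f, g⟩, hf, hg, -, -, -, -, -⟩
    apply Subtype.ext
    apply Prod.ext
    · funext i
      have : i = 0 := Fin.ext (by simpa using Nat.lt_one_iff.mp i.isLt)
      rw [this]; exact hf
    · funext i
      have : i = 0 := Fin.ext (by simpa using Nat.lt_one_iff.mp i.isLt)
      rw [this]; exact hg
  haveI : Unique {p // Pk 0 0 0 p} := ⟨⟨_⟩, hu⟩
  exact Nat.card_unique

lemma cN0gt (a b : ℕ) (h : 0 < a) : cN 0 a b = 0 := by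
  have : IsEmpty {p // Pk 0 a b p} := by
    constructor
    rintro ⟨p, h1, -, -, -, -, hA, -⟩
    have hl : (Fin.last 0) = (0 : Fin 1) := rfl
    rw [hl, h1] at hA
    omega
  exact Nat.card_of_isEmpty



lemma cN_eq_GQ (m : ℕ) : ∀ a b : ℕ, b ≤ a → (cN m a b : ℚ) = GQ m a b := by
  induction m with
  | zero =>
    intro a b hba
    rcases Nat.eq_zero_or_pos a with rfl | ha
    · have hb : b = 0 := by omega
      subst hb
      rw [cN000, GQ_zero_zero]
      norm_num
    · rw [cN0gt a b ha, GQ_zero_pos a b ha]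
      norm_num
  | succ m ih =>
    have key : ∀ a b : ℕ, b ≤ a + 2 → (cN m a b : ℚ) = GQ m a b := by
      intro a b h
      by_cases hba : b ≤ a
      · exact ih a b hba
      · rw [L0 m a b (by omega), GQ_gt (by omega : a < b) h]
        norm_num
    intro a b hba
    rcases a with _ | a
    · have hb : b = 0 := by omega
      subst hb
      rw [L3 m]
      push_cast
      rw [key 1 1 (by omega), key 1 0 (by omega), G3]
    · rcases b with _ | b
      · rw [L2 m a]
        push_cast
        rw [key (a+2) 1 (by omega), key (a+2) 0 (by omega), key a 1 (by omega),
          key a 0 (by omega), G2]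
      · rw [L1 m a b (by omega)]
        push_cast
        rw [key (a+2) (b+2) (by omega), key (a+2) b (by omega), key a (b+2) (by omega),
          key a b (by omega), G1]

/-- The number of Dyck path packings of length `2n` is `C_n C_{n+1}`. -/
theorem stmt8 (n : ℕ) :
    Nat.card {p : (Fin (2*n + 1) → ℕ) × (Fin (2*n + 1) → ℕ) // IsDyckPacking n p.1 p.2} =
      catalan n * catalan (n + 1) := by
  have h1 : Nat.card {p : (Fin (2*n + 1) → ℕ) × (Fin (2*n + 1) → ℕ) // IsDyckPacking n p.1 p.2}
      = cN (2*n) 0 0 := by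
    apply Nat.card_congr
    apply Equiv.subtypeEquivRight
    intro p
    constructor
    · rintro ⟨⟨d1, d2, d3⟩, ⟨e1, e2, e3⟩, hle⟩
      exact ⟨d1, e1, d3, e3, hle, d2, e2⟩
    · rintro ⟨d1, e1, d3, e3, hle, d2, e2⟩
      exact ⟨⟨d1, d2, d3⟩, ⟨e1, e2, e3⟩, hle⟩
  have h2 := cN_eq_GQ (2*n) 0 0 (le_refl 0)
  rw [GQ_final] at h2
  rw [h1]
  exact_mod_cast h2

end PackingProof
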